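/- arXiv:1206.7077 — 5 statements merged into one kernel-verified Lean document; each statement's English description precedes it below -/
import Mathlib

section
/- Let M be a 3×3 matrix with rational entries, let λ ∈ ℝ be a simple root of the characteristic polynomial of M (i.e. the characteristic polynomial vanishes at λ but its derivative does not), and suppose α, β ∈ ℝ satisfy the row-eigenvector equation (1,α,β)·M = λ·(1,α,β). Then there exists a subfield K of ℝ with [K : ℚ] ≤ 3 (K finite-dimensional over ℚ of degree at most 3) such that α ∈ K and β ∈ K. -/
open Matrix Polynomial

/-- If `(1, α, β)` is a real row eigenvector of a rational 3×3 matrix `M` whose eigenvalue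
`λ` is a simple root of the characteristic polynomial of `M`, then `α` and `β` lie in a
common subfield of `ℝ` of degree at most 3 over `ℚ`. -/
theorem eigenvector_entries_in_cubic_field
    (M : Matrix (Fin 3) (Fin 3) ℚ) (l α β : ℝ)
    (hroot : Polynomial.aeval l M.charpoly = 0)
    (hsimple : Polynomial.aeval l (Polynomial.derivative M.charpoly) ≠ 0)
    (heig : Matrix.vecMul ![1, α, β] (M.map (algebraMap ℚ ℝ)) = l • ![1, α, β]) :
    ∃ K : IntermediateField ℚ ℝ,
      FiniteDimensional ℚ K ∧ Module.finrank ℚ K ≤ 3 ∧ α ∈ K ∧ β ∈ K := by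
  set r : Fin 3 → Fin 3 → ℝ := fun i j => algebraMap ℚ ℝ (M i j) with hr
  have heq : ∀ j, r 0 j + α * r 1 j + β * r 2 j = l * (![1, α, β] j) := by
    intro j
    have := congrFun heig j
    simpa [Matrix.vecMul, dotProduct, Fin.sum_univ_three, Matrix.map_apply, hr,
      mul_comm] using this
  have e0 : r 0 0 + α * r 1 0 + β * r 2 0 = l * 1 := heq 0
  have e1 : r 0 1 + α * r 1 1 + β * r 2 1 = l * α := heq 1
  have e2 : r 0 2 + α * r 1 2 + β * r 2 2 = l * β := heq 2
  have hd : (Polynomial.aeval l) (Polynomial.derivative M.charpoly) =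
      3*l^2 - 2*(r 0 0 + r 1 1 + r 2 2)*l
      + (r 0 0 * r 1 1 - r 0 1 * r 1 0 + r 0 0 * r 2 2 - r 0 2 * r 2 0
         + r 1 1 * r 2 2 - r 1 2 * r 2 1) := by
    rw [Matrix.charpoly, Matrix.det_fin_three]
    simp only [charmatrix_apply_eq, charmatrix_apply_ne M 0 1 (by decide),
      charmatrix_apply_ne M 0 2 (by decide), charmatrix_apply_ne M 1 0 (by decide),
      charmatrix_apply_ne M 1 2 (by decide), charmatrix_apply_ne M 2 0 (by decide),
      charmatrix_apply_ne M 2 1 (by decide),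
      derivative_mul, derivative_sub, derivative_add, derivative_X, derivative_C, derivative_neg,
      map_add, map_sub, _root_.map_mul, map_neg, _root_.map_one, aeval_X, aeval_C, map_zero]
    ring
  set D01 : ℝ := r 1 0 * r 2 1 + (l - r 1 1) * r 2 0 with hD01
  set D02 : ℝ := -(r 1 0 * (l - r 2 2)) - r 1 2 * r 2 0 with hD02
  set D12 : ℝ := (l - r 1 1) * (l - r 2 2) - r 1 2 * r 2 1 with hD12
  have hkey : (Polynomial.aeval l) (Polynomial.derivative M.charpoly)
      = D12 - α * D02 + β * D01 := by
    rw [hd, hD01, hD02, hD12]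
    linear_combination (-(2*l) + r 1 1 + r 2 2) * e0 - r 1 0 * e1 - r 2 0 * e2
  -- the field
  set K : IntermediateField ℚ ℝ := IntermediateField.adjoin ℚ {l} with hK
  have hlK : l ∈ K := IntermediateField.mem_adjoin_simple_self ℚ l
  have hrK : ∀ i j, r i j ∈ K := fun i j => K.algebraMap_mem (M i j)
  have hint : IsIntegral ℚ l := ⟨M.charpoly, M.charpoly_monic, by rwa [← aeval_def]⟩
  have hmem : α ∈ K ∧ β ∈ K := by
    by_cases h12 : D12 ≠ 0
    · have hα : α = (r 0 2 * r 2 1 + r 0 1 * (l - r 2 2)) / D12 := by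
        rw [eq_div_iff h12, hD12]
        linear_combination (-(l - r 2 2)) * e1 - r 2 1 * e2
      have hβ : β = (r 0 1 * r 1 2 + r 0 2 * (l - r 1 1)) / D12 := by
        rw [eq_div_iff h12, hD12]
        linear_combination (-(r 1 2)) * e1 - (l - r 1 1) * e2
      constructor
      · rw [hα, hD12]
        exact div_mem (add_mem (mul_mem (hrK 0 2) (hrK 2 1))
            (mul_mem (hrK 0 1) (sub_mem hlK (hrK 2 2))))
          (sub_mem (mul_mem (sub_mem hlK (hrK 1 1)) (sub_mem hlK (hrK 2 2)))
            (mul_mem (hrK 1 2) (hrK 2 1)))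
      · rw [hβ, hD12]
        exact div_mem (add_mem (mul_mem (hrK 0 1) (hrK 1 2))
            (mul_mem (hrK 0 2) (sub_mem hlK (hrK 1 1))))
          (sub_mem (mul_mem (sub_mem hlK (hrK 1 1)) (sub_mem hlK (hrK 2 2)))
            (mul_mem (hrK 1 2) (hrK 2 1)))
    · by_cases h02 : D02 ≠ 0
      · have hα : α = (r 0 2 * r 2 0 - (l - r 0 0) * (l - r 2 2)) / D02 := by
          rw [eq_div_iff h02, hD02]
          linear_combination (-(l - r 2 2)) * e0 - r 2 0 * e2
        have hβ : β = (-((l - r 0 0) * r 1 2) - r 0 2 * r 1 0) / D02 := by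
          rw [eq_div_iff h02, hD02]
          linear_combination r 1 0 * e2 - r 1 2 * e0
        constructor
        · rw [hα, hD02]
          exact div_mem (sub_mem (mul_mem (hrK 0 2) (hrK 2 0))
              (mul_mem (sub_mem hlK (hrK 0 0)) (sub_mem hlK (hrK 2 2))))
            (sub_mem (neg_mem (mul_mem (hrK 1 0) (sub_mem hlK (hrK 2 2))))
              (mul_mem (hrK 1 2) (hrK 2 0)))
        · rw [hβ, hD02]
          exact div_mem (sub_mem (neg_mem (mul_mem (sub_mem hlK (hrK 0 0)) (hrK 1 2)))
              (mul_mem (hrK 0 2) (hrK 1 0)))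
            (sub_mem (neg_mem (mul_mem (hrK 1 0) (sub_mem hlK (hrK 2 2))))
              (mul_mem (hrK 1 2) (hrK 2 0)))
      · have h01 : D01 ≠ 0 := by
          intro h
          push_neg at h12
          apply hsimple
          rw [hkey, h12, h]
          push_neg at h02
          rw [h02]
          ring
        have hα : α = (r 0 1 * r 2 0 + (l - r 0 0) * r 2 1) / D01 := by
          rw [eq_div_iff h01, hD01]
          linear_combination r 2 1 * e0 - r 2 0 * e1
        have hβ : β = ((l - r 0 0) * (l - r 1 1) - r 0 1 * r 1 0) / D01 := by
          rw [eq_div_iff h01, hD01]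
          linear_combination (l - r 1 1) * e0 + r 1 0 * e1
        constructor
        · rw [hα, hD01]
          exact div_mem (add_mem (mul_mem (hrK 0 1) (hrK 2 0))
              (mul_mem (sub_mem hlK (hrK 0 0)) (hrK 2 1)))
            (add_mem (mul_mem (hrK 1 0) (hrK 2 1))
              (mul_mem (sub_mem hlK (hrK 1 1)) (hrK 2 0)))
        · rw [hβ, hD01]
          exact div_mem (sub_mem (mul_mem (sub_mem hlK (hrK 0 0)) (sub_mem hlK (hrK 1 1)))
              (mul_mem (hrK 0 1) (hrK 1 0)))
            (add_mem (mul_mem (hrK 1 0) (hrK 2 1))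
              (mul_mem (sub_mem hlK (hrK 1 1)) (hrK 2 0)))
  refine ⟨K, IntermediateField.adjoin.finiteDimensional hint, ?_, hmem.1, hmem.2⟩
  rw [hK, IntermediateField.adjoin.finrank hint]
  have hdvd := minpoly.dvd ℚ l hroot
  have hle := Polynomial.natDegree_le_of_dvd hdvd M.charpoly_monic.ne_zero
  simpa [Matrix.charpoly_natDegree_eq_dim] using hle
end

section
/- Fix a triple (σ,τ₀,τ₁) of permutations in S₃ and let i : ℕ → {0,1} be purely periodic, i.e. there exists p ≥ 1 with i_{m+p} = i_m for all m ≥ 0. Suppose the intersection Δ(i₀,i₁,…) is a singleton {(α,β)} for some α, β ∈ ℝ. Then there exists a subfield K of ℝ with [K : ℚ] ≤ 3 such that α ∈ K and β ∈ K. -/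
open Matrix

noncomputable section

/-- `A₀ = ![![0,0,1],![1,0,0],![0,1,1]]`. -/
def A0 : Matrix (Fin 3) (Fin 3) ℝ := !![0,0,1; 1,0,0; 0,1,1]
/-- `A₁ = ![![1,0,1],![0,1,0],![0,0,1]]`. -/
def A1 : Matrix (Fin 3) (Fin 3) ℝ := !![1,0,1; 0,1,0; 0,0,1]
/-- `B = ![![1,1,1],![0,1,1],![0,0,1]]`. -/
def Bm : Matrix (Fin 3) (Fin 3) ℝ := !![1,1,1; 0,1,1; 0,0,1]

/-- The permutation matrix of `ρ`: entry `(i,j)` is `1` iff `ρ i = j`.  In particular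
`P (finRotate 3)`, the matrix of the cycle `(1 2 3)`, is `![![0,1,0],![0,0,1],![1,0,0]]`. -/
def P (ρ : Equiv.Perm (Fin 3)) : Matrix (Fin 3) (Fin 3) ℝ := ρ.permMatrix ℝ

/-- The pair of TRIP matrices `F₀ = P_σ·A₀·P_{τ₀}`, `F₁ = P_σ·A₁·P_{τ₁}` of a triple
of permutations, as a function `Fin 2 → Matrix`. -/
def Fmat (σ τ0 τ1 : Equiv.Perm (Fin 3)) : Fin 2 → Matrix (Fin 3) (Fin 3) ℝ :=
  ![P σ * A0 * P τ0, P σ * A1 * P τ1]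

/-- `prodMat G n = B · (G 0) · (G 1) ⋯ (G n)`. -/
def prodMat (G : ℕ → Matrix (Fin 3) (Fin 3) ℝ) (n : ℕ) : Matrix (Fin 3) (Fin 3) ℝ :=
  Bm * ((List.range (n+1)).map G).prod

/-- The triangle `Δ(i₀,…,iₙ)`: the convex hull of the images under
`π(x₀,x₁,x₂) = (x₁/x₀, x₂/x₀)` of the three columns of `M`. -/
def tri (M : Matrix (Fin 3) (Fin 3) ℝ) : Set (ℝ × ℝ) :=
  convexHull ℝ {p | ∃ j : Fin 3, p = (M 1 j / M 0 j, M 2 j / M 0 j)}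

/-- `Δ(i₀,i₁,…) = ⋂ₙ Δ(i₀,…,iₙ)`, for the sequence of matrices `G m = F_{i_m}`. -/
def DeltaInf (G : ℕ → Matrix (Fin 3) (Fin 3) ℝ) : Set (ℝ × ℝ) :=
  ⋂ n : ℕ, tri (prodMat G n)

/-!
Let `M n = B F_{i₀} ⋯ F_{iₙ}`. A point `(x, z)` lies in `Δ(i₀,…,iₙ)` iff `(1, x, z)` lies in the
cone spanned by the columns of `M n`, and these cones decrease with `n`. Periodicity gives the
rational matrix `C = B F_{i₀} ⋯ F_{i_{p-1}} B⁻¹` with `C M n = M (n + p)`, so `C` maps every cone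
into a later one; as `(1, α, β)` spans the only ray common to all cones, it is an eigenvector of
`C` for some `μ > 0`, and `[ℚ(μ) : ℚ] ≤ 3`. If the `μ`-eigenspace meets the plane `x₀ = 0` only
in `0`, it is the line through `(1, α, β)` and is cut out by equations over `ℚ(μ)`, so
`α, β ∈ ℚ(μ)`. Otherwise every point of the first cone on the affine eigenline through
`(1, α, β)` lies in all cones, hence equals `(1, α, β)`; this forces `(1, α, β)` onto an edge of
the first cone, i.e. `(α, β)` is a vertex of `Δ(i₀)`, which is rational.
-/

open Filter Topology IntermediateField

namespace Matrix

variable {m n : Type*} [Fintype n]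

def colCone (M : Matrix m n ℝ) : Set (m → ℝ) := {y | ∃ c, 0 ≤ c ∧ M *ᵥ c = y}

theorem mulVec_nonneg {M : Matrix m n ℝ} (hM : ∀ i j, 0 ≤ M i j) {c : n → ℝ} (hc : 0 ≤ c) :
    0 ≤ M *ᵥ c :=
  fun i => Finset.sum_nonneg fun j _ => mul_nonneg (hM i j) (hc j)

theorem mulVec_apply_pos {M : Matrix m n ℝ} {i : m} (hM : ∀ j, 0 < M i j) {c : n → ℝ}
    (hc : 0 ≤ c) (hc₀ : c ≠ 0) : 0 < (M *ᵥ c) i := by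
  obtain ⟨j, hj⟩ : ∃ j, c j ≠ 0 := Function.ne_iff.mp hc₀
  exact Finset.sum_pos' (fun k _ => mul_nonneg (hM k).le (hc k))
    ⟨j, Finset.mem_univ j, mul_pos (hM j) ((hc j).lt_of_ne' hj)⟩

theorem smul_mem_colCone {M : Matrix m n ℝ} {y : m → ℝ} (hy : y ∈ M.colCone) {a : ℝ}
    (ha : 0 ≤ a) : a • y ∈ M.colCone := by
  obtain ⟨c, hc, rfl⟩ := hy
  exact ⟨a • c, smul_nonneg ha hc, mulVec_smul M a c⟩

theorem mulVec_mem_colCone_mul [Fintype m] {k : Type*} {M : Matrix m n ℝ} {y : m → ℝ}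
    (hy : y ∈ M.colCone) (A : Matrix k m ℝ) : A *ᵥ y ∈ (A * M).colCone := by
  obtain ⟨c, hc, rfl⟩ := hy
  exact ⟨c, hc, (mulVec_mulVec c A M).symm⟩

theorem colCone_mul_subset {k : Type*} [Fintype k] (M : Matrix m n ℝ) {N : Matrix n k ℝ}
    (hN : ∀ i j, 0 ≤ N i j) : (M * N).colCone ⊆ M.colCone := by
  rintro _ ⟨c, hc, rfl⟩
  exact ⟨N *ᵥ c, mulVec_nonneg hN hc, mulVec_mulVec c M N⟩

end Matrix

theorem exists_eq_zero_and_neg_of_forall_nonneg_add_smul {ι : Type*} [Finite ι]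
    {c u : ι → ℝ} (hc : 0 ≤ c) (h : ∀ t : ℝ, 0 ≤ c + t • u → t = 0) :
    ∃ k, c k = 0 ∧ u k < 0 := by
  by_contra! hu
  have hev : ∀ᶠ t in 𝓝[>] (0 : ℝ), 0 ≤ c + t • u := by
    refine eventually_all.mpr fun k => ?_
    rcases (hc k).eq_or_lt with hck | hck
    · filter_upwards [self_mem_nhdsWithin] with t ht
      simpa [← hck] using mul_nonneg (le_of_lt ht) (hu k hck.symm)
    · have hcont : Continuous fun t : ℝ => c k + t * u k := by fun_prop
      have := hcont.tendsto 0
      simp only [zero_mul, add_zero] at this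
      filter_upwards [nhdsWithin_le_nhds (this.eventually (lt_mem_nhds hck))] with t ht
      simpa using ht.le
  obtain ⟨t, ht, ht₀⟩ := (hev.and self_mem_nhdsWithin).exists
  exact (ne_of_gt ht₀) (h t ht)

theorem Fin.exists_eq_single_of_apply_eq_zero {α : Type*} [Zero α] {c : Fin 3 → α}
    {j k : Fin 3} (hjk : j ≠ k) (hj : c j = 0) (hk : c k = 0) : ∃ l, c = Pi.single l (c l) := by
  have hthird : ∀ j k : Fin 3, j ≠ k → ∃ l, ∀ m, m = j ∨ m = k ∨ m = l := by decide
  obtain ⟨l, hl⟩ := hthird j k hjk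
  refine ⟨l, funext fun m => ?_⟩
  by_cases hml : m = l
  · subst hml; simp
  · rcases hl m with rfl | rfl | rfl
    · simp [hj, hml]
    · simp [hk, hml]
    · exact absurd rfl hml

theorem Subfield.apply_mem_of_mulVec_eq_zero {L n : Type*} [Field L] [Fintype n] [DecidableEq n]
    (K : Subfield L) {A : Matrix n n L} (hA : ∀ i j, A i j ∈ K) {v : n → L} {i₀ : n}
    (hv : A *ᵥ v = 0) (hv₀ : v i₀ = 1) (huniq : ∀ w, A *ᵥ w = 0 → w i₀ = 0 → w = 0) (i : n) :
    v i ∈ K := by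
  let AK : Matrix n n K := fun i j => ⟨A i j, hA i j⟩
  have hAK : AK.map K.subtype = A := rfl
  have hdet : AK.det = 0 := by
    apply K.subtype_injective
    rw [map_zero, RingHom.map_det, RingHom.mapMatrix_apply, hAK]
    exact Matrix.exists_mulVec_eq_zero_iff.mp ⟨v, fun h => by simp [h] at hv₀, hv⟩
  obtain ⟨u, hu, hAu⟩ := Matrix.exists_mulVec_eq_zero_iff.mpr hdet
  set u' : n → L := fun i => u i
  have hAu' : A *ᵥ u' = 0 := by
    ext i
    have := (RingHom.map_mulVec K.subtype AK u i).symm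
    simp only [hAu, Pi.zero_apply, map_zero] at this
    exact this
  have hu'₀ : u' i₀ ≠ 0 := fun h =>
    hu (funext fun i => Subtype.ext (congrFun (huniq u' hAu' h) i))
  have hu' : u' = u' i₀ • v := by
    refine sub_eq_zero.mp (huniq _ ?_ ?_)
    · rw [Matrix.mulVec_sub, Matrix.mulVec_smul, hAu', hv, smul_zero, sub_zero]
    · simp [hv₀]
  have hvi : v i = u' i / u' i₀ := by
    rw [eq_div_iff hu'₀, mul_comm, congrFun hu' i, Pi.smul_apply, smul_eq_mul]
  rw [hvi]
  exact div_mem (u i).2 (u i₀).2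

theorem isIntegral_and_finrank_adjoin_le_of_mulVec_eq_smul {K L n : Type*} [Field K] [Field L]
    [Algebra K L] [Fintype n] [DecidableEq n] (A : Matrix n n K) {μ : L} {v : n → L}
    (hv : v ≠ 0) (h : A.map (algebraMap K L) *ᵥ v = μ • v) :
    IsIntegral K μ ∧ Module.finrank K K⟮μ⟯ ≤ Fintype.card n := by
  have hroot : Polynomial.aeval μ A.charpoly = 0 := by
    rw [Polynomial.aeval_def, ← Polynomial.eval_map, ← Matrix.charpoly_map, Matrix.eval_charpoly]
    refine Matrix.exists_mulVec_eq_zero_iff.mp ⟨v, hv, ?_⟩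
    ext i
    simp [Matrix.sub_mulVec, h]
  have hint : IsIntegral K μ := ⟨A.charpoly, A.charpoly_monic, by rwa [← Polynomial.aeval_def]⟩
  refine ⟨hint, ?_⟩
  rw [adjoin.finrank hint, ← A.charpoly_natDegree_eq_dim]
  exact Polynomial.natDegree_le_of_dvd (minpoly.dvd K μ hroot) A.charpoly_monic.ne_zero

theorem mem_tri_iff {M : Matrix (Fin 3) (Fin 3) ℝ} (hM : ∀ j, 0 < M 0 j) {x z : ℝ} :
    (x, z) ∈ tri M ↔ ![1, x, z] ∈ M.colCone := by
  constructor
  · intro h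
    suffices tri M ⊆ {q | ![1, q.1, q.2] ∈ M.colCone} from this h
    refine convexHull_min ?_ ?_
    · rintro _ ⟨j, rfl⟩
      refine ⟨Pi.single j (M 0 j)⁻¹, Pi.single_nonneg.mpr (inv_nonneg.mpr (hM j).le), ?_⟩
      ext r
      fin_cases r <;> simp [mulVec_single, div_eq_mul_inv, (hM j).ne']
    · rintro q ⟨c, hc, hcq⟩ q' ⟨c', hc', hcq'⟩ a b ha hb hab
      refine ⟨a • c + b • c', add_nonneg (smul_nonneg ha hc) (smul_nonneg hb hc'), ?_⟩
      rw [mulVec_add, mulVec_smul, mulVec_smul, hcq, hcq']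
      ext r
      fin_cases r <;> simp [hab]
  · rintro ⟨c, hc, hcv⟩
    refine mem_convexHull_of_exists_fintype (fun j => c j * M 0 j)
      (fun j => (M 1 j / M 0 j, M 2 j / M 0 j)) (fun j => mul_nonneg (hc j) (hM j).le) ?_
      (fun j => ⟨j, rfl⟩) ?_
    · simpa [mulVec, dotProduct, mul_comm] using congrFun hcv 0
    · have hcancel : ∀ r j, c j * M 0 j * (M r j / M 0 j) = M r j * c j := fun r j => by
        field_simp [(hM j).ne']
      have h1 := congrFun hcv 1
      have h2 := congrFun hcv 2
      simp only [mulVec, dotProduct] at h1 h2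
      ext <;> simp [Prod.fst_sum, Prod.snd_sum, hcancel, h1, h2]

def ratMatrices (n : Type*) [Fintype n] [DecidableEq n] : Subring (Matrix n n ℝ) :=
  (algebraMap ℚ ℝ).mapMatrix.range

theorem apply_mem_of_mem_ratMatrices {n : Type*} [Fintype n] [DecidableEq n]
    {A : Matrix n n ℝ} (hA : A ∈ ratMatrices n) (K : IntermediateField ℚ ℝ) (i j : n) :
    A i j ∈ K := by
  obtain ⟨Aq, rfl⟩ := hA
  exact K.algebraMap_mem (Aq i j)

section PeriodicCones

variable {m k : Type*} [Fintype m] [Fintype k] {M : ℕ → Matrix m k ℝ} {C : Matrix m m ℝ}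
  {p : ℕ}

theorem forall_mem_colCone_of_mulVec_eq_smul (hanti : Antitone fun n => (M n).colCone)
    (hC : ∀ n, C * M n = M (n + p)) (hp : 1 ≤ p) {y : m → ℝ} (hy : y ∈ (M 0).colCone)
    {μ : ℝ} (hμ : 0 < μ) (hCy : C *ᵥ y = μ • y) (n : ℕ) : y ∈ (M n).colCone := by
  have hmul : ∀ k, y ∈ (M (k * p)).colCone := by
    intro k
    induction k with
    | zero => simpa using hy
    | succ k ih =>
      have := smul_mem_colCone (mulVec_mem_colCone_mul ih C) (inv_nonneg.mpr hμ.le)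
      rwa [hCy, smul_smul, inv_mul_cancel₀ hμ.ne', one_smul, hC, ← Nat.succ_mul] at this
  exact hanti (Nat.le_mul_of_pos_right n hp) (hmul n)

theorem exists_pos_mulVec_eq_smul {i₀ : m} {v : m → ℝ} (hrow : ∀ n j, 0 < M n i₀ j)
    (hanti : Antitone fun n => (M n).colCone) (hC : ∀ n, C * M n = M (n + p))
    (hv : ∀ n, v ∈ (M n).colCone) (hv₀ : v i₀ = 1)
    (huniq : ∀ y, (∀ n, y ∈ (M n).colCone) → y i₀ = 1 → y = v) :
    ∃ μ : ℝ, 0 < μ ∧ C *ᵥ v = μ • v := by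
  obtain ⟨c, hc, hcv⟩ := hv 0
  have hc₀ : c ≠ 0 := by
    rintro rfl
    simp [← hcv] at hv₀
  set μ := (C *ᵥ v) i₀ with hμ_def
  have hμ : 0 < μ := by
    rw [hμ_def, ← hcv, mulVec_mulVec, hC, zero_add]
    exact mulVec_apply_pos (hrow p) hc hc₀
  have hfix : μ⁻¹ • C *ᵥ v = v := by
    refine huniq _ (fun n => smul_mem_colCone ?_ (inv_nonneg.mpr hμ.le)) ?_
    · have := mulVec_mem_colCone_mul (hv n) C
      rw [hC] at this
      exact hanti (Nat.le_add_right n p) this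
    · simp [← hμ_def, hμ.ne']
  refine ⟨μ, hμ, ?_⟩
  calc C *ᵥ v = μ • (μ⁻¹ • C *ᵥ v) := by rw [smul_smul, mul_inv_cancel₀ hμ.ne', one_smul]
    _ = μ • v := by rw [hfix]

end PeriodicCones

section ThreeDimensionalCones

variable {M : ℕ → Matrix (Fin 3) (Fin 3) ℝ} {C : Matrix (Fin 3) (Fin 3) ℝ} {p : ℕ}
  {v : Fin 3 → ℝ}

theorem exists_eq_div_of_mulVec_eq_smul (hdet : IsUnit (M 0))
    (hanti : Antitone fun n => (M n).colCone) (hC : ∀ n, C * M n = M (n + p)) (hp : 1 ≤ p)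
    (hv : ∀ n, v ∈ (M n).colCone) (hv₀ : v 0 = 1)
    (huniq : ∀ y, (∀ n, y ∈ (M n).colCone) → y 0 = 1 → y = v) {μ : ℝ} (hμ : 0 < μ)
    (hCv : C *ᵥ v = μ • v) {w : Fin 3 → ℝ} (hCw : C *ᵥ w = μ • w) (hw₀ : w 0 = 0)
    (hw : w ≠ 0) : ∃ l, ∀ r, v r = M 0 r l / M 0 0 l := by
  obtain ⟨c, hc, hcv⟩ := hv 0
  set u := (M 0)⁻¹ *ᵥ w
  have hMu : M 0 *ᵥ u = w := by
    rw [mulVec_mulVec, mul_nonsing_inv _ ((M 0).isUnit_iff_isUnit_det.mp hdet), one_mulVec]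
  have hline : ∀ t : ℝ, 0 ≤ c + t • u → t = 0 := by
    intro t ht
    have hmem : v + t • w ∈ (M 0).colCone :=
      ⟨c + t • u, ht, by rw [mulVec_add, mulVec_smul, hcv, hMu]⟩
    have heig : C *ᵥ (v + t • w) = μ • (v + t • w) := by
      rw [mulVec_add, mulVec_smul, hCv, hCw, smul_add, smul_comm]
    have := huniq _ (forall_mem_colCone_of_mulVec_eq_smul hanti hC hp hmem hμ heig)
      (by simp [hv₀, hw₀])
    exact (smul_eq_zero.mp (add_eq_left.mp this)).resolve_right hw
  -- `c` must vanish at an index where `u > 0` and at one where `u < 0`, so only one entry is left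
  obtain ⟨k, hck, huk⟩ := exists_eq_zero_and_neg_of_forall_nonneg_add_smul hc hline
  obtain ⟨j, hcj, huj⟩ := exists_eq_zero_and_neg_of_forall_nonneg_add_smul (u := -u) hc
    fun t ht => neg_eq_zero.mp (hline (-t) (by simpa using ht))
  have hjk : j ≠ k := by
    rintro rfl
    simp only [Pi.neg_apply, neg_lt_zero] at huj
    exact lt_asymm huj huk
  obtain ⟨l, hl⟩ := Fin.exists_eq_single_of_apply_eq_zero hjk hcj hck
  have hcol : ∀ r, v r = M 0 r l * c l := by
    intro r
    rw [← hcv, hl, mulVec_single]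
    simp
  refine ⟨l, fun r => ?_⟩
  have h0 : M 0 0 l * c l = 1 := (hcol 0).symm.trans hv₀
  rw [eq_div_iff (left_ne_zero_of_mul_eq_one h0), hcol, mul_assoc, mul_comm (c l), h0, mul_one]

theorem exists_cubic_field_of_periodic_colCone (hrow : ∀ n j, 0 < M n 0 j)
    (hdet : IsUnit (M 0)) (hM₀ : M 0 ∈ ratMatrices (Fin 3)) (hCrat : C ∈ ratMatrices (Fin 3))
    (hanti : Antitone fun n => (M n).colCone) (hC : ∀ n, C * M n = M (n + p)) (hp : 1 ≤ p)
    (hv : ∀ n, v ∈ (M n).colCone) (hv₀ : v 0 = 1)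
    (huniq : ∀ y, (∀ n, y ∈ (M n).colCone) → y 0 = 1 → y = v) :
    ∃ K : IntermediateField ℚ ℝ,
      FiniteDimensional ℚ K ∧ Module.finrank ℚ K ≤ 3 ∧ ∀ r, v r ∈ K := by
  obtain ⟨μ, hμ, hCv⟩ := exists_pos_mulVec_eq_smul hrow hanti hC hv hv₀ huniq
  obtain ⟨Cq, rfl⟩ := hCrat
  rw [RingHom.mapMatrix_apply] at hCv
  have hv_ne : v ≠ 0 := fun h => by simp [h] at hv₀
  obtain ⟨hint, hrank⟩ := isIntegral_and_finrank_adjoin_le_of_mulVec_eq_smul Cq hv_ne hCv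
  refine ⟨ℚ⟮μ⟯, adjoin.finiteDimensional hint, by simpa using hrank, ?_⟩
  by_cases hdeg : ∃ w, Cq.map (algebraMap ℚ ℝ) *ᵥ w = μ • w ∧ w 0 = 0 ∧ w ≠ 0
  · obtain ⟨w, hCw, hw₀, hw⟩ := hdeg
    obtain ⟨l, hl⟩ :=
      exists_eq_div_of_mulVec_eq_smul hdet hanti hC hp hv hv₀ huniq hμ hCv hCw hw₀ hw
    intro r
    rw [hl r]
    exact div_mem (apply_mem_of_mem_ratMatrices hM₀ _ r l)
      (apply_mem_of_mem_ratMatrices hM₀ _ 0 l)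
  · push Not at hdeg
    refine Subfield.apply_mem_of_mulVec_eq_zero ℚ⟮μ⟯.toSubfield
      (A := Cq.map (algebraMap ℚ ℝ) - μ • 1) ?_ ?_ hv₀ ?_
    · intro i j
      refine sub_mem (apply_mem_of_mem_ratMatrices ⟨Cq, rfl⟩ _ i j) ?_
      rw [Matrix.smul_apply, smul_eq_mul]
      exact mul_mem (mem_adjoin_simple_self ℚ μ) (apply_mem_of_mem_ratMatrices (one_mem _) _ i j)
    · rw [sub_mulVec, smul_mulVec, one_mulVec, hCv, sub_self]
    · intro w hw hw₀
      rw [sub_mulVec, smul_mulVec, one_mulVec, sub_eq_zero] at hw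
      exact hdeg w hw hw₀

end ThreeDimensionalCones

def nonnegMatrices (n : Type*) [Fintype n] [DecidableEq n] : Submonoid (Matrix n n ℝ) where
  carrier := {A | ∀ i j, 0 ≤ A i j}
  mul_mem' {A B} hA hB i j := Finset.sum_nonneg fun k _ => mul_nonneg (hA i k) (hB k j)
  one_mem' i j := by
    rw [one_apply]
    split_ifs <;> norm_num

def nonnegRatUnits (n : Type*) [Fintype n] [DecidableEq n] : Submonoid (Matrix n n ℝ) :=
  nonnegMatrices n ⊓ IsUnit.submonoid _ ⊓ (ratMatrices n).toSubmonoid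

theorem P_mem_nonnegRatUnits (ρ : Equiv.Perm (Fin 3)) : P ρ ∈ nonnegRatUnits (Fin 3) := by
  refine ⟨⟨fun i j => ?_, ?_⟩, ⟨ρ.permMatrix ℚ, ?_⟩⟩
  · simp only [P, Equiv.Perm.permMatrix, PEquiv.toMatrix_apply]
    split_ifs <;> norm_num
  · change IsUnit (P ρ)
    rw [isUnit_iff_isUnit_det, P, det_permutation]
    exact (Units.isUnit _).map (Int.castRingHom ℝ)
  · simp [P, Equiv.Perm.permMatrix]

theorem A0_mem_nonnegRatUnits : A0 ∈ nonnegRatUnits (Fin 3) := by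
  refine ⟨⟨fun i j => ?_, ?_⟩, ⟨!![0,0,1; 1,0,0; 0,1,1], ?_⟩⟩
  · fin_cases i <;> fin_cases j <;> simp [A0]
  · simp [IsUnit.mem_submonoid_iff, isUnit_iff_isUnit_det, det_fin_three, A0]
  · ext i j; fin_cases i <;> fin_cases j <;> simp [A0]

theorem A1_mem_nonnegRatUnits : A1 ∈ nonnegRatUnits (Fin 3) := by
  refine ⟨⟨fun i j => ?_, ?_⟩, ⟨!![1,0,1; 0,1,0; 0,0,1], ?_⟩⟩
  · fin_cases i <;> fin_cases j <;> simp [A1]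
  · simp [IsUnit.mem_submonoid_iff, isUnit_iff_isUnit_det, det_fin_three, A1]
  · ext i j; fin_cases i <;> fin_cases j <;> simp [A1]

theorem Fmat_mem_nonnegRatUnits (σ τ0 τ1 : Equiv.Perm (Fin 3)) (k : Fin 2) :
    Fmat σ τ0 τ1 k ∈ nonnegRatUnits (Fin 3) := by
  fin_cases k
  · exact mul_mem (mul_mem (P_mem_nonnegRatUnits σ) A0_mem_nonnegRatUnits)
      (P_mem_nonnegRatUnits τ0)
  · exact mul_mem (mul_mem (P_mem_nonnegRatUnits σ) A1_mem_nonnegRatUnits)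
      (P_mem_nonnegRatUnits τ1)

theorem Bm_mem_ratMatrices : Bm ∈ ratMatrices (Fin 3) :=
  ⟨!![1,1,1; 0,1,1; 0,0,1], by ext i j; fin_cases i <;> fin_cases j <;> simp [Bm]⟩

theorem Bm_inv_mem_ratMatrices : Bm⁻¹ ∈ ratMatrices (Fin 3) := by
  refine ⟨!![1,-1,0; 0,1,-1; 0,0,1], (inv_eq_left_inv ?_).symm⟩
  ext i j
  fin_cases i <;> fin_cases j <;> simp [Bm, mul_apply, Fin.sum_univ_three]

theorem isUnit_det_Bm : IsUnit Bm.det := by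
  simp [det_fin_three, Bm]

section TripProducts

variable {G : ℕ → Matrix (Fin 3) (Fin 3) ℝ}

theorem list_prod_range_mem_nonnegRatUnits (hG : ∀ m, G m ∈ nonnegRatUnits (Fin 3)) (n : ℕ) :
    ((List.range n).map G).prod ∈ nonnegRatUnits (Fin 3) :=
  Submonoid.list_prod_mem _ (by simpa using fun m _ => hG m)

theorem prodMat_succ (n : ℕ) : prodMat G (n + 1) = prodMat G n * G (n + 1) := by
  rw [prodMat, prodMat, List.range_succ, List.map_append, List.prod_append, List.map_singleton,
    List.prod_singleton, Matrix.mul_assoc]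

theorem prodMat_mem_ratMatrices (hG : ∀ m, G m ∈ nonnegRatUnits (Fin 3)) (n : ℕ) :
    prodMat G n ∈ ratMatrices (Fin 3) :=
  mul_mem Bm_mem_ratMatrices (list_prod_range_mem_nonnegRatUnits hG (n + 1)).2

theorem isUnit_prodMat (hG : ∀ m, G m ∈ nonnegRatUnits (Fin 3)) (n : ℕ) :
    IsUnit (prodMat G n) :=
  ((isUnit_iff_isUnit_det Bm).mpr isUnit_det_Bm).mul
    (list_prod_range_mem_nonnegRatUnits hG (n + 1)).1.2

theorem prodMat_apply_zero_pos (hG : ∀ m, G m ∈ nonnegRatUnits (Fin 3)) (n : ℕ) (j : Fin 3) :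
    0 < prodMat G n 0 j := by
  obtain ⟨⟨hQ, hQu⟩, -⟩ := list_prod_range_mem_nonnegRatUnits hG (n + 1)
  set Q := ((List.range (n + 1)).map G).prod
  have hcol : (fun k => Q k j) ≠ 0 := fun h =>
    ((isUnit_iff_isUnit_det Q).mp hQu).ne_zero (det_eq_zero_of_column_eq_zero j (congrFun h))
  have hB : ∀ k, 0 < Bm 0 k := by
    intro k
    fin_cases k <;> simp [Bm]
  exact mulVec_apply_pos hB (fun k => hQ k j) hcol

theorem antitone_colCone_prodMat (hG : ∀ m, G m ∈ nonnegRatUnits (Fin 3)) :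
    Antitone fun n => (prodMat G n).colCone :=
  antitone_nat_of_succ_le fun n => by
    rw [prodMat_succ]
    exact colCone_mul_subset _ (hG (n + 1)).1.1

theorem prodMat_add_period {p : ℕ} (hper : ∀ m, G (m + p) = G m) (n : ℕ) :
    Bm * ((List.range p).map G).prod * Bm⁻¹ * prodMat G n = prodMat G (n + p) := by
  have hshift : G ∘ (p + ·) = G := funext fun m => by simp [add_comm p m, hper]
  rw [prodMat, prodMat, show n + p + 1 = p + (n + 1) by omega,
    List.range_add (n := p) (m := n + 1), List.map_append, List.map_map, hshift,
    List.prod_append, Matrix.mul_assoc _ Bm⁻¹, ← Matrix.mul_assoc Bm⁻¹,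
    nonsing_inv_mul _ isUnit_det_Bm, Matrix.one_mul, Matrix.mul_assoc]

theorem mem_DeltaInf_iff (hG : ∀ m, G m ∈ nonnegRatUnits (Fin 3)) {x z : ℝ} :
    (x, z) ∈ DeltaInf G ↔ ∀ n, ![1, x, z] ∈ (prodMat G n).colCone :=
  Set.mem_iInter.trans (forall_congr' fun n =>
    mem_tri_iff fun j => prodMat_apply_zero_pos hG n j)

end TripProducts

/-- If the digit sequence `i` is purely periodic and the intersection
`Δ(i₀,i₁,…)` for the TRIP maps of the triple `(σ,τ₀,τ₁)` is the singleton `{(α,β)}`,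
then `α` and `β` lie in a common subfield of `ℝ` of degree at most 3 over `ℚ`. -/
theorem purelyPeriodic_singleton_cubic
    (σ τ0 τ1 : Equiv.Perm (Fin 3)) (i : ℕ → Fin 2) (p : ℕ) (hp : 1 ≤ p)
    (hper : ∀ m, i (m + p) = i m) (α β : ℝ)
    (hsing : DeltaInf (fun m => Fmat σ τ0 τ1 (i m)) = {(α, β)}) :
    ∃ K : IntermediateField ℚ ℝ,
      FiniteDimensional ℚ K ∧ Module.finrank ℚ K ≤ 3 ∧ α ∈ K ∧ β ∈ K := by
  set G := fun m => Fmat σ τ0 τ1 (i m)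
  have hG : ∀ m, G m ∈ nonnegRatUnits (Fin 3) := fun m => Fmat_mem_nonnegRatUnits σ τ0 τ1 (i m)
  have hv : ∀ n, ![1, α, β] ∈ (prodMat G n).colCone := (mem_DeltaInf_iff hG).mp (hsing ▸ rfl)
  have huniq : ∀ y, (∀ n, y ∈ (prodMat G n).colCone) → y 0 = 1 → y = ![1, α, β] := by
    intro y hy hy₀
    have hy_eq : y = ![1, y 1, y 2] := by
      ext r
      fin_cases r <;> simp [hy₀]
    rw [hy_eq] at hy
    have := (mem_DeltaInf_iff hG).mpr hy
    rw [hsing, Set.mem_singleton_iff, Prod.mk.injEq] at this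
    rw [hy_eq, this.1, this.2]
  obtain ⟨K, hfin, hrank, hK⟩ := exists_cubic_field_of_periodic_colCone
    (prodMat_apply_zero_pos hG) (isUnit_prodMat hG 0) (prodMat_mem_ratMatrices hG 0)
    (mul_mem (mul_mem Bm_mem_ratMatrices (list_prod_range_mem_nonnegRatUnits hG p).2)
      Bm_inv_mem_ratMatrices)
    (antitone_colCone_prodMat hG) (prodMat_add_period fun m => by simp [G, hper]) hp hv
    (by simp) huniq
  exact ⟨K, hfin, hrank, hK 1, hK 2⟩
end
end

section
/- Let (σₙ,τ₀ₙ,τ₁ₙ)_{n≥0} be an arbitrary sequence of triples of permutations in S₃ and let i : ℕ → {0,1} be any sequence. Suppose there is a constant C > 0 such that for every n ≥ 0 and every pair j, j' ∈ {1,2,3} one has x_{n,j} ≤ C·x_{n,j'}. If v ∈ ℝ³ is a column of Mₙ, then for every integer k > 2C², v is not equal to any column of M_{n+k}. -/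
/-!
Let `xₘ` be the first row of `Mₘ`, so that `xₘ₊₁ = xₘ ᵥ* F_{m+1}`. Every column sum of a
TRIP matrix is at least 1, so a lower bound on the entries of `xₘ` persists; its row sums are at
least 1 and add up to 4, so the entry sum of `xₘ` grows at each step by at least the smallest
entry. If the column of `Mₙ` with first entry `a` reappears in `M_{n+k}`, the entries of `xₙ` are
at least `a / C`, so the entry sum of `x_{n+k}` is at least `a + k a / C`; the ratio bound caps it
by `(1 + 2C) a`, whence `k ≤ 2C²`.
-/

open Matrix

noncomputable section

section VecMul

variable {ι : Type*} [Fintype ι] {G : Matrix ι ι ℝ} {x : ι → ℝ} {c : ℝ}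

lemma le_vecMul_of_le (hG : ∀ s t, 0 ≤ G s t) (hcol : ∀ t, 1 ≤ ∑ s, G s t) (hc : 0 ≤ c)
    (hx : ∀ s, c ≤ x s) (t : ι) : c ≤ (x ᵥ* G) t :=
  calc c ≤ c * ∑ s, G s t := le_mul_of_one_le_right hc (hcol t)
    _ = ∑ s, c * G s t := Finset.mul_sum _ _ _
    _ ≤ ∑ s, x s * G s t :=
        Finset.sum_le_sum fun s _ => mul_le_mul_of_nonneg_right (hx s) (hG s t)

/-- `∑ t, (x ᵥ* G) t = ∑ s, x s * rₛ` for the row sums `rₛ`, and each excess `rₛ - 1 ≥ 0` is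
weighted by `x s ≥ c`. -/
lemma sum_add_mul_le_sum_vecMul (hrow : ∀ s, 1 ≤ ∑ t, G s t) (hx : ∀ s, c ≤ x s) :
    ∑ s, x s + c * (∑ s, ∑ t, G s t - Fintype.card ι) ≤ ∑ t, (x ᵥ* G) t := by
  have hexcess : ∀ s, c * (∑ t, G s t - 1) ≤ x s * (∑ t, G s t - 1) := fun s =>
    mul_le_mul_of_nonneg_right (hx s) (sub_nonneg.2 (hrow s))
  calc ∑ s, x s + c * (∑ s, ∑ t, G s t - Fintype.card ι)
      = ∑ s, (x s + c * (∑ t, G s t - 1)) := by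
        rw [Finset.sum_add_distrib, ← Finset.mul_sum, Finset.sum_sub_distrib]
        simp
    _ ≤ ∑ s, (x s + x s * (∑ t, G s t - 1)) :=
        Finset.sum_le_sum fun s _ => add_le_add le_rfl (hexcess s)
    _ = ∑ t, (x ᵥ* G) t := by
        simp only [vecMul, dotProduct]
        rw [Finset.sum_comm]
        simp [mul_sub, Finset.mul_sum]

end VecMul

/-- The properties of the TRIP matrices `F_{n,b}` on which the argument rests. -/
structure IsTripMatrix (F : Matrix (Fin 3) (Fin 3) ℝ) : Prop where
  nonneg : ∀ s t, 0 ≤ F s t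
  one_le_sum_col : ∀ t, 1 ≤ ∑ s, F s t
  one_le_sum_row : ∀ s, 1 ≤ ∑ t, F s t
  sum_eq_four : ∑ s, ∑ t, F s t = 4

lemma IsTripMatrix.submatrix {F : Matrix (Fin 3) (Fin 3) ℝ} (hF : IsTripMatrix F)
    (e f : Equiv.Perm (Fin 3)) : IsTripMatrix (F.submatrix e f) where
  nonneg s t := hF.nonneg (e s) (f t)
  one_le_sum_col t := by
    simpa only [submatrix_apply, Equiv.sum_comp e (fun s => F s (f t))]
      using hF.one_le_sum_col (f t)
  one_le_sum_row s := by
    simpa only [submatrix_apply, Equiv.sum_comp f (F (e s))] using hF.one_le_sum_row (e s)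
  sum_eq_four := by
    simp only [submatrix_apply, Equiv.sum_comp f (F (e _)), Equiv.sum_comp e (fun s => ∑ t, F s t)]
    exact hF.sum_eq_four

lemma isTripMatrix_A0 : IsTripMatrix A0 where
  nonneg s t := by fin_cases s <;> fin_cases t <;> simp [A0]
  one_le_sum_col t := by fin_cases t <;> simp [A0, Fin.sum_univ_three]
  one_le_sum_row s := by fin_cases s <;> simp [A0, Fin.sum_univ_three]
  sum_eq_four := by simp [A0, Fin.sum_univ_three]; norm_num

lemma isTripMatrix_A1 : IsTripMatrix A1 where
  nonneg s t := by fin_cases s <;> fin_cases t <;> simp [A1]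
  one_le_sum_col t := by fin_cases t <;> simp [A1, Fin.sum_univ_three]
  one_le_sum_row s := by fin_cases s <;> simp [A1, Fin.sum_univ_three]
  sum_eq_four := by simp [A1, Fin.sum_univ_three]; norm_num

lemma P_mul_mul_P (ρ τ : Equiv.Perm (Fin 3)) (A : Matrix (Fin 3) (Fin 3) ℝ) :
    P ρ * A * P τ = A.submatrix ρ τ.symm := by
  rw [P, P, Equiv.Perm.permMatrix, Equiv.Perm.permMatrix, PEquiv.toMatrix_toPEquiv_mul,
    PEquiv.mul_toMatrix_toPEquiv, submatrix_submatrix]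
  simp

lemma isTripMatrix_Fmat (σ τ0 τ1 : Equiv.Perm (Fin 3)) (b : Fin 2) :
    IsTripMatrix (Fmat σ τ0 τ1 b) := by
  fin_cases b
  · simpa [Fmat, P_mul_mul_P] using isTripMatrix_A0.submatrix σ τ0.symm
  · simpa [Fmat, P_mul_mul_P] using isTripMatrix_A1.submatrix σ τ1.symm

lemma prodMat_row_succ (G : ℕ → Matrix (Fin 3) (Fin 3) ℝ) (m : ℕ) :
    prodMat G (m + 1) 0 = prodMat G m 0 ᵥ* G (m + 1) := by
  rw [← mul_apply_eq_vecMul, prodMat, prodMat, List.range_succ, List.map_append,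
    List.prod_append, List.map_singleton, List.prod_singleton, Matrix.mul_assoc]

lemma prodMat_row_zero (G : ℕ → Matrix (Fin 3) (Fin 3) ℝ) :
    prodMat G 0 0 = (fun _ => 1) ᵥ* G 0 := by
  ext t
  simp [prodMat, mul_apply, vecMul, dotProduct, Bm, Fin.sum_univ_three]

section TripProduct

variable {G : ℕ → Matrix (Fin 3) (Fin 3) ℝ} (hG : ∀ m, IsTripMatrix (G m))
include hG

lemma one_le_prodMat (m : ℕ) (t : Fin 3) : 1 ≤ prodMat G m 0 t := by
  induction m generalizing t with
  | zero =>
    rw [prodMat_row_zero]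
    exact le_vecMul_of_le (hG 0).nonneg (hG 0).one_le_sum_col zero_le_one (fun _ => le_rfl) t
  | succ m ih =>
    rw [prodMat_row_succ]
    exact le_vecMul_of_le (hG _).nonneg (hG _).one_le_sum_col zero_le_one ih t

variable {c : ℝ} {n : ℕ} (hc : 0 ≤ c) (hn : ∀ s, c ≤ prodMat G n 0 s)
include hc hn

lemma le_prodMat_add (k : ℕ) (s : Fin 3) : c ≤ prodMat G (n + k) 0 s := by
  induction k generalizing s with
  | zero => exact hn s
  | succ k ih =>
    rw [← add_assoc, prodMat_row_succ]
    exact le_vecMul_of_le (hG _).nonneg (hG _).one_le_sum_col hc ih s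

lemma sum_prodMat_add_mul_le (k : ℕ) :
    ∑ s, prodMat G n 0 s + k * c ≤ ∑ s, prodMat G (n + k) 0 s := by
  induction k with
  | zero => simp
  | succ k ih =>
    have hstep := sum_add_mul_le_sum_vecMul (hG (n + k + 1)).one_le_sum_row
      (le_prodMat_add hG hc hn k)
    rw [(hG _).sum_eq_four, Fintype.card_fin, ← prodMat_row_succ] at hstep
    norm_num at hstep
    rw [← add_assoc]
    push_cast
    linarith

end TripProduct

lemma sum_le_of_le_mul {f : Fin 3 → ℝ} {C : ℝ} {j : Fin 3} (h : ∀ s, f s ≤ C * f j) :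
    ∑ s, f s ≤ (1 + 2 * C) * f j := by
  fin_cases j <;> simp [Fin.sum_univ_three] at h ⊢ <;> linarith [h 0, h 1, h 2]

/-- Lemma 7.3 ("change of vertex"): if the ratios of the first-row entries of the
matrices `Mₙ = B·F_{0,i₀}⋯F_{n,iₙ}` are uniformly bounded by `C`, then a column of `Mₙ`
cannot remain a column of `M_{n+k}` for any `k > 2C²`. -/
theorem column_changes
    (σ τ0 τ1 : ℕ → Equiv.Perm (Fin 3)) (i : ℕ → Fin 2) (C : ℝ) (hC : 0 < C)
    (hbound : ∀ n : ℕ, ∀ j j' : Fin 3,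
      prodMat (fun m => Fmat (σ m) (τ0 m) (τ1 m) (i m)) n 0 j ≤
        C * prodMat (fun m => Fmat (σ m) (τ0 m) (τ1 m) (i m)) n 0 j')
    (n : ℕ) (v : Fin 3 → ℝ) (j : Fin 3)
    (hv : v = fun r => prodMat (fun m => Fmat (σ m) (τ0 m) (τ1 m) (i m)) n r j)
    (k : ℕ) (hk : 2 * C ^ 2 < (k : ℝ)) (j' : Fin 3) :
    v ≠ fun r => prodMat (fun m => Fmat (σ m) (τ0 m) (τ1 m) (i m)) (n + k) r j' := by
  set G := fun m => Fmat (σ m) (τ0 m) (τ1 m) (i m)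
  have hG : ∀ m, IsTripMatrix (G m) := fun m => isTripMatrix_Fmat _ _ _ _
  subst hv
  intro hcol
  set a := prodMat G n 0 j
  have ha : 0 < a := zero_lt_one.trans_le (one_le_prodMat hG n j)
  have hsame : prodMat G (n + k) 0 j' = a := (congrFun hcol 0).symm
  have hlow : ∀ s, a / C ≤ prodMat G n 0 s := fun s =>
    (div_le_iff₀ hC).2 (by linarith [hbound n j s])
  have hgrow := sum_prodMat_add_mul_le hG (div_nonneg ha.le hC.le) hlow k
  have hstart : a ≤ ∑ s, prodMat G n 0 s :=
    Finset.single_le_sum (fun s _ => zero_le_one.trans (one_le_prodMat hG n s))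
      (Finset.mem_univ j)
  have hend := sum_le_of_le_mul (hbound (n + k) · j')
  rw [hsame] at hend
  have hkC : k * (a / C) ≤ 2 * C * a := by linarith
  rw [mul_div_assoc', div_le_iff₀ hC] at hkC
  nlinarith [mul_lt_mul_of_pos_right hk ha]
end
end

section
/- Fix a triple (σ,τ₀,τ₁) of permutations in S₃ with F₀ = P_σ·A₀·P_{τ₀} and F₁ = P_σ·A₁·P_{τ₁}, let ρ ∈ S₃, and set F₀' = P_ρ·F₀·P_ρ⁻¹ and F₁' = P_ρ·F₁·P_ρ⁻¹ (these are the matrices of the triple (ρσ, τ₀ρ⁻¹, τ₁ρ⁻¹)). Let i : ℕ → {0,1} be any sequence. If the intersection Δ(i₀,i₁,…) formed with F₀, F₁ is a singleton, then the intersection Δ'(i₀,i₁,…) formed in the same way with F₀', F₁' is a singleton. -/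
open Matrix

noncomputable section

/-! Conjugating every factor by `P ρ` turns `B·G₀⋯Gₙ` into `C·(B·G₀⋯Gₙ)·P ρ⁻¹` with
`C = B·P ρ·B⁻¹`. The right factor only permutes columns, so it does not change the triangle.
Because the first row of `B` is `(1,1,1)`, the first row of `C` is `(1,0,0)`; hence `C` acts on
the chart `x₀ = 1` as an injective affine map `T`, which commutes with convex hulls and, being
injective, with the intersection over `n`. So `Δ' = T(Δ)`, a singleton when `Δ` is one. -/

namespace Matrix

variable (n R : Type*) [Fintype n] [DecidableEq n]

def nonnegSubmonoid [Semiring R] [PartialOrder R] [IsOrderedRing R] :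
    Submonoid (Matrix n n R) where
  carrier := {M | ∀ i j, 0 ≤ M i j}
  mul_mem' {M N} hM hN i j := Finset.sum_nonneg fun k _ => mul_nonneg (hM i k) (hN k j)
  one_mem' i j := by
    rw [one_apply]
    split_ifs <;> simp

variable {n R}

theorem sum_col_pos_of_nonneg_of_isUnit [Field R] [LinearOrder R] [IsStrictOrderedRing R]
    {N : Matrix n n R} (hN : N ∈ nonnegSubmonoid n R) (hu : IsUnit N) (j : n) :
    0 < ∑ i, N i j := by
  refine (Finset.sum_nonneg fun i _ => hN i j).lt_of_ne fun hsum => ?_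
  have hcol : ∀ i, N i j = 0 := fun i =>
    (Finset.sum_eq_zero_iff_of_nonneg fun i _ => hN i j).mp hsum.symm i (Finset.mem_univ i)
  exact ((isUnit_iff_isUnit_det N).mp hu).ne_zero (det_eq_zero_of_column_eq_zero j hcol)

theorem isUnit_of_det_eq_one [CommRing R] {M : Matrix n n R} (h : M.det = 1) : IsUnit M :=
  (isUnit_iff_isUnit_det M).mpr (h ▸ isUnit_one)

end Matrix

theorem List.prod_map_conj {M : Type*} [Monoid M] {a b : M} (hab : a * b = 1)
    (hba : b * a = 1) (l : List M) : (l.map fun x => a * x * b).prod = a * l.prod * b := by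
  induction l with
  | nil => simp [hab]
  | cons x l ih =>
    rw [List.map_cons, List.prod_cons, ih, List.prod_cons]
    simp only [mul_assoc]
    rw [← mul_assoc b a, hba, one_mul]

lemma P_mul_P_inv (ρ : Equiv.Perm (Fin 3)) : P ρ * P ρ⁻¹ = 1 := by
  rw [P, P, ← permMatrix_mul, inv_mul_cancel, permMatrix_one]

lemma P_mem_nonnegSubmonoid (ρ : Equiv.Perm (Fin 3)) :
    P ρ ∈ nonnegSubmonoid (Fin 3) ℝ := by
  intro i j
  rw [P, Equiv.Perm.permMatrix, PEquiv.toMatrix_apply]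
  split_ifs <;> norm_num

lemma isUnit_P (ρ : Equiv.Perm (Fin 3)) : IsUnit (P ρ) := IsUnit.of_mul_eq_one _ (P_mul_P_inv ρ)

lemma mul_P_apply (M : Matrix (Fin 3) (Fin 3) ℝ) (τ : Equiv.Perm (Fin 3)) (i j : Fin 3) :
    (M * P τ) i j = M i (τ.symm j) := by
  rw [P, Equiv.Perm.permMatrix, PEquiv.mul_toMatrix_toPEquiv]; rfl

lemma det_A0 : A0.det = 1 := by simp [A0, det_fin_three]
lemma det_A1 : A1.det = 1 := by simp [A1, det_fin_three]
lemma det_Bm : Bm.det = 1 := by simp [Bm, det_fin_three]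

lemma A0_mem_nonnegSubmonoid : A0 ∈ nonnegSubmonoid (Fin 3) ℝ := by
  intro i j; fin_cases i <;> fin_cases j <;> simp [A0]
lemma A1_mem_nonnegSubmonoid : A1 ∈ nonnegSubmonoid (Fin 3) ℝ := by
  intro i j; fin_cases i <;> fin_cases j <;> simp [A1]

lemma Fmat_mem (σ τ0 τ1 : Equiv.Perm (Fin 3)) (k : Fin 2) :
    Fmat σ τ0 τ1 k ∈ nonnegSubmonoid (Fin 3) ℝ ⊓ IsUnit.submonoid _ := by
  have hP (ρ : Equiv.Perm (Fin 3)) : P ρ ∈ nonnegSubmonoid (Fin 3) ℝ ⊓ IsUnit.submonoid _ :=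
    ⟨P_mem_nonnegSubmonoid ρ, isUnit_P ρ⟩
  fin_cases k
  · exact mul_mem (mul_mem (hP σ) ⟨A0_mem_nonnegSubmonoid, isUnit_of_det_eq_one det_A0⟩) (hP τ0)
  · exact mul_mem (mul_mem (hP σ) ⟨A1_mem_nonnegSubmonoid, isUnit_of_det_eq_one det_A1⟩) (hP τ1)

lemma Bm_row_zero : Bm 0 = 1 := by
  ext j; fin_cases j <;> rfl

lemma Bm_mul_apply_zero (N : Matrix (Fin 3) (Fin 3) ℝ) (j : Fin 3) :
    (Bm * N) 0 j = ∑ i, N i j := by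
  simp [mul_apply, Bm_row_zero]

lemma Bm_mul_P_mul_Bm_inv_row_zero (ρ : Equiv.Perm (Fin 3)) :
    (Bm * P ρ * Bm⁻¹) 0 = Pi.single 0 1 := by
  have hrow : (Bm * P ρ) 0 = Bm 0 := by
    ext j; rw [mul_P_apply, Bm_row_zero]; rfl
  ext j
  rw [mul_apply_eq_vecMul, hrow, ← mul_apply_eq_vecMul,
    mul_nonsing_inv _ (det_Bm ▸ isUnit_one), one_eq_pi_single]

lemma prodMat_conj (G : ℕ → Matrix (Fin 3) (Fin 3) ℝ) (ρ : Equiv.Perm (Fin 3)) (n : ℕ) :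
    prodMat (fun m => P ρ * G m * P ρ⁻¹) n = Bm * P ρ * Bm⁻¹ * prodMat G n * P ρ⁻¹ := by
  have hinv : P ρ⁻¹ * P ρ = 1 := by simpa using P_mul_P_inv ρ⁻¹
  have hmap : (List.range (n + 1)).map (fun m => P ρ * G m * P ρ⁻¹) =
      ((List.range (n + 1)).map G).map (fun X => P ρ * X * P ρ⁻¹) := by
    rw [List.map_map]; rfl
  rw [prodMat, prodMat, hmap, List.prod_map_conj (P_mul_P_inv ρ) hinv]
  simp only [mul_assoc, nonsing_inv_mul_cancel_left _ _ (det_Bm ▸ isUnit_one)]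

lemma prodMat_row_zero_pos (G : ℕ → Matrix (Fin 3) (Fin 3) ℝ)
    (hG : ∀ m, G m ∈ nonnegSubmonoid (Fin 3) ℝ ⊓ IsUnit.submonoid _) (n : ℕ) (j : Fin 3) :
    0 < prodMat G n 0 j := by
  have hprod := (nonnegSubmonoid (Fin 3) ℝ ⊓ IsUnit.submonoid _).list_prod_mem
    (l := (List.range (n + 1)).map G) fun _ hX => by
      obtain ⟨m, -, rfl⟩ := List.mem_map.mp hX
      exact hG m
  rw [prodMat, Bm_mul_apply_zero]
  exact sum_col_pos_of_nonneg_of_isUnit hprod.1 hprod.2 j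

lemma tri_mul_P (M : Matrix (Fin 3) (Fin 3) ℝ) (τ : Equiv.Perm (Fin 3)) :
    tri (M * P τ) = tri M := by
  simp only [tri, mul_P_apply]
  congr 1
  ext p
  simp only [Set.mem_ofPred_eq]
  exact (τ.exists_congr_left (p := fun j => p = (M 1 j / M 0 j, M 2 j / M 0 j))).symm

def colPoint (M : Matrix (Fin 3) (Fin 3) ℝ) (j : Fin 3) : ℝ × ℝ :=
  (M 1 j / M 0 j, M 2 j / M 0 j)

lemma tri_eq_convexHull_range (M : Matrix (Fin 3) (Fin 3) ℝ) :
    tri M = convexHull ℝ (Set.range (colPoint M)) := by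
  simp only [tri, colPoint, Set.range, eq_comm]

/-- The projective map `x ↦ C x` in the chart `x₀ = 1`; it is affine when the first row of `C`
is `(1,0,0)` (see `colPoint_mul`). -/
def chartMap (C : Matrix (Fin 3) (Fin 3) ℝ) : ℝ × ℝ →ᵃ[ℝ] ℝ × ℝ where
  toFun p := (C 1 0 + C 1 1 * p.1 + C 1 2 * p.2, C 2 0 + C 2 1 * p.1 + C 2 2 * p.2)
  linear := (C 1 1 • LinearMap.fst ℝ ℝ ℝ + C 1 2 • LinearMap.snd ℝ ℝ ℝ).prod
    (C 2 1 • LinearMap.fst ℝ ℝ ℝ + C 2 2 • LinearMap.snd ℝ ℝ ℝ)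
  map_vadd' p v := by ext <;> simp <;> ring

lemma colPoint_mul {C : Matrix (Fin 3) (Fin 3) ℝ} (hC : C 0 = Pi.single 0 1)
    (M : Matrix (Fin 3) (Fin 3) ℝ) {j : Fin 3} (hM : M 0 j ≠ 0) :
    colPoint (C * M) j = chartMap C (colPoint M j) := by
  have h0 : (C * M) 0 j = M 0 j := by
    simp [mul_apply_eq_vecMul, hC]
  simp only [colPoint, chartMap, AffineMap.coe_mk, h0]
  simp only [mul_apply, Fin.sum_univ_three]
  ext <;> field_simp

lemma mulVec_lift {C : Matrix (Fin 3) (Fin 3) ℝ} (hC : C 0 = Pi.single 0 1) (p : ℝ × ℝ) :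
    C *ᵥ ![1, p.1, p.2] = ![1, (chartMap C p).1, (chartMap C p).2] := by
  have hC (k : Fin 3) : C 0 k = if k = 0 then 1 else 0 := by
    simpa [Pi.single_apply] using congrFun hC k
  ext k
  fin_cases k <;> simp [Matrix.mulVec, dotProduct, Fin.sum_univ_three, chartMap, hC]

lemma chartMap_injective {C : Matrix (Fin 3) (Fin 3) ℝ} (hC : C 0 = Pi.single 0 1)
    (hu : IsUnit C) : Function.Injective (chartMap C) := by
  intro p r hpr
  have hlift : ![1, p.1, p.2] = ![1, r.1, r.2] :=
    mulVec_injective_iff_isUnit.mpr hu (by rw [mulVec_lift hC, mulVec_lift hC, hpr])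
  exact Prod.ext (congrFun hlift 1) (congrFun hlift 2)

lemma tri_mul_of_row_zero {C : Matrix (Fin 3) (Fin 3) ℝ} (hC : C 0 = Pi.single 0 1)
    {M : Matrix (Fin 3) (Fin 3) ℝ} (hM : ∀ j, M 0 j ≠ 0) :
    tri (C * M) = chartMap C '' tri M := by
  have hcol : colPoint (C * M) = chartMap C ∘ colPoint M :=
    funext fun j => colPoint_mul hC M (hM j)
  rw [tri_eq_convexHull_range, tri_eq_convexHull_range, hcol, Set.range_comp,
    AffineMap.image_convexHull]

lemma DeltaInf_conj (G : ℕ → Matrix (Fin 3) (Fin 3) ℝ)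
    (hG : ∀ m, G m ∈ nonnegSubmonoid (Fin 3) ℝ ⊓ IsUnit.submonoid _)
    (ρ : Equiv.Perm (Fin 3)) :
    DeltaInf (fun m => P ρ * G m * P ρ⁻¹) = chartMap (Bm * P ρ * Bm⁻¹) '' DeltaInf G := by
  have hC := Bm_mul_P_mul_Bm_inv_row_zero ρ
  have hB := isUnit_of_det_eq_one det_Bm
  have hCu : IsUnit (Bm * P ρ * Bm⁻¹) :=
    (hB.mul (isUnit_P ρ)).mul (isUnit_nonsing_inv_iff.mpr hB)
  have htri (n : ℕ) : tri (prodMat (fun m => P ρ * G m * P ρ⁻¹) n)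
      = chartMap (Bm * P ρ * Bm⁻¹) '' tri (prodMat G n) := by
    rw [prodMat_conj, tri_mul_P,
      tri_mul_of_row_zero hC fun j => (prodMat_row_zero_pos G hG n j).ne']
  simp only [DeltaInf, htri]
  exact ((chartMap_injective hC hCu).injOn.image_iInter_eq).symm

/-- If `Δ(i₀,i₁,…)` is a singleton for the TRIP matrices `F₀, F₁` of `(σ,τ₀,τ₁)`,
then it is also a singleton for the conjugated matrices
`F₀' = P_ρ·F₀·P_{ρ⁻¹}`, `F₁' = P_ρ·F₁·P_{ρ⁻¹}` (the matrices of
`(ρσ, τ₀ρ⁻¹, τ₁ρ⁻¹)`), for any `ρ ∈ S₃`. -/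
theorem singleton_of_conjugate
    (σ τ0 τ1 : Equiv.Perm (Fin 3)) (ρ : Equiv.Perm (Fin 3)) (i : ℕ → Fin 2)
    (h : ∃ q : ℝ × ℝ, DeltaInf (fun m => Fmat σ τ0 τ1 (i m)) = {q}) :
    ∃ q : ℝ × ℝ, DeltaInf (fun m => P ρ * Fmat σ τ0 τ1 (i m) * P ρ⁻¹) = {q} := by
  obtain ⟨q, hq⟩ := h
  refine ⟨chartMap (Bm * P ρ * Bm⁻¹) q, ?_⟩
  rw [DeltaInf_conj _ (fun m => Fmat_mem σ τ0 τ1 (i m)), hq, Set.image_singleton]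
end
end

section
/- Let α ∈ ℝ with 0 < α < 1. Then T(α, α²) = (α, α²) if and only if there exists k ∈ ℕ such that α³ + kα² + α − 1 = 0. (Equivalently: the point (α,α²) has a purely periodic triangle sequence of period one under the triangle map precisely when α is a root of x³ + kx² + x − 1 for some nonnegative integer k.) -/
noncomputable section

/-- The triangle map `T = T_{(e,e,e)}`: `T(x,y) = (y/x, (1 - x - k·y)/x)` where
`k = ⌊(1-x)/y⌋`. -/
def triangleMap (q : ℝ × ℝ) : ℝ × ℝ :=
  (q.2 / q.1, (1 - q.1 - (⌊(1 - q.1) / q.2⌋ : ℝ) * q.2) / q.1)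

/-- `(α, α²)` is a fixed point of the triangle map (i.e. has purely periodic triangle
sequence of period one) iff `α³ + kα² + α − 1 = 0` for some `k ∈ ℕ`. -/
theorem fixed_point_iff_cubic (α : ℝ) (h0 : 0 < α) (h1 : α < 1) :
    triangleMap (α, α ^ 2) = (α, α ^ 2) ↔
      ∃ k : ℕ, α ^ 3 + (k : ℝ) * α ^ 2 + α - 1 = 0 := by
  have hα : α ≠ 0 := ne_of_gt h0
  have hsq : (0:ℝ) < α ^ 2 := by positivity
  constructor
  · intro h
    have h2 := congrArg Prod.snd h
    simp only [triangleMap] at h2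
    set m := ⌊(1 - α) / α ^ 2⌋ with hm
    have hmn : 0 ≤ m := Int.le_floor.2 (by
      push_cast
      exact div_nonneg (by linarith) (le_of_lt hsq))
    have h3 : 1 - α - (m : ℝ) * α ^ 2 = α ^ 2 * α := by
      field_simp at h2
      linarith [h2]
    refine ⟨m.toNat, ?_⟩
    have : ((m.toNat : ℤ) : ℝ) = (m : ℝ) := by rw [Int.toNat_of_nonneg hmn]
    push_cast at this ⊢
    rw [this]
    nlinarith [h3]
  · rintro ⟨k, hk⟩
    have hfloor : ⌊(1 - α) / α ^ 2⌋ = (k : ℤ) := by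
      have hdiv : (1 - α) / α ^ 2 = α + (k : ℝ) := by
        field_simp
        nlinarith [hk]
      rw [hdiv]
      rw [Int.floor_eq_iff]
      push_cast
      constructor <;> linarith
    simp only [triangleMap, hfloor]
    apply Prod.ext
    · simp [pow_two, mul_div_assoc, div_self hα]
    · simp only
      push_cast
      field_simp
      nlinarith [hk]
end
end
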